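/- arXiv:1511.04292 — 4 statements merged into one kernel-verified Lean document; each statement's English description precedes it below -/
import Mathlib

section
/- Let ω₁,…,ω_P be pairwise distinct nonzero reals and κ₁,…,κ_P pairwise distinct reals with κ_jω_i ≠ 1 for all i,j. Then for all indices i, m in {1,…,P}: Σ_{j=1}^{P} [1/(-1+κ_j ω_m)] · ∏_{k≠j} ∏_{l≠i} (-1+κ_j ω_l)/(κ_j-κ_k) = δ_{im} · ∏_{k=1}^{P} ∏_{l≠i} (ω_i-ω_l)/(-1+κ_k ω_i), where δ_{im} is the Kronecker delta. -/
open Finset Polynomial Lagrange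

/-!
The polynomial `f = ∏_{l ≠ i} (ω_l X - 1)` has degree `P - 1 < P`, so it equals its Lagrange
interpolant at the nodes `κ_k`. Evaluating the barycentric form of that interpolant at
`x = 1 / ω_m` is the partial fraction decomposition of `f(x) / ∏_k (x - κ_k)`, and after clearing
powers of `ω_m` the sum becomes `∏_{l ≠ i} (ω_m - ω_l) / ∏_k (κ_k ω_m - 1)`. For `m ≠ i` the
factor `l = m` vanishes, which is the Kronecker delta.
-/

variable {F ι α : Type*} [Field F] [DecidableEq ι] {s : Finset ι} {v : ι → F}

theorem eval_eq_eval_nodal_mul_sum_nodalWeight (hvs : Set.InjOn v s) {f : F[X]}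
    (hf : f.degree < #s) {x : F} (hx : ∀ j ∈ s, x ≠ v j) :
    f.eval x = (nodal s v).eval x * ∑ j ∈ s, nodalWeight s v j * (x - v j)⁻¹ * f.eval (v j) := by
  conv_lhs => rw [eq_interpolate hvs hf]
  exact eval_interpolate_not_at_node _ hx

theorem natDegree_prod_X_mul_C_sub_one_le (t : Finset α) (c : α → F) :
    (∏ l ∈ t, (X * C (c l) - 1)).natDegree ≤ #t := by
  refine (natDegree_prod_le _ _).trans ?_
  refine (sum_le_card_nsmul _ _ 1 fun l _ => ?_).trans (by simp)
  compute_degree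

theorem sum_inv_mul_nodalWeight_mul_prod (hvs : Set.InjOn v s) (t : Finset α) (c : α → F)
    (hst : #s = #t + 1) {b : F} (hb : b ≠ 0) (hvb : ∀ j ∈ s, v j * b ≠ 1) :
    ∑ j ∈ s, (v j * b - 1)⁻¹ * (nodalWeight s v j * ∏ l ∈ t, (v j * c l - 1)) =
      (∏ j ∈ s, (v j * b - 1))⁻¹ * ∏ l ∈ t, (b - c l) := by
  have hb' : -b ≠ 0 := neg_ne_zero.mpr hb
  have hD : ∏ j ∈ s, (v j * b - 1) ≠ 0 :=
    prod_ne_zero_iff.mpr fun j hj => sub_ne_zero.mpr (hvb j hj)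
  have hx : ∀ j ∈ s, b⁻¹ ≠ v j := fun j hj h => hvb j hj (by rw [← h, inv_mul_cancel₀ hb])
  have hnode : ∀ y : F, b⁻¹ - y = (-b)⁻¹ * (y * b - 1) := fun y => by field_simp; ring
  have hcoef : ∀ y : F, y * b⁻¹ - 1 = (-b)⁻¹ * (b - y) := fun y => by field_simp; ring
  let f : F[X] := ∏ l ∈ t, (X * C (c l) - 1)
  have hf_eval : ∀ x, f.eval x = ∏ l ∈ t, (x * c l - 1) := fun x => by
    simp only [f, eval_prod, eval_sub, eval_mul, eval_X, eval_C, eval_one]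
  have hf : f.degree < #s := by
    refine (degree_le_of_natDegree_le (natDegree_prod_X_mul_C_sub_one_le t c)).trans_lt ?_
    exact_mod_cast (by omega : #t < #s)
  have key := eval_eq_eval_nodal_mul_sum_nodalWeight hvs hf hx
  have hnodal : (nodal s v).eval b⁻¹ = (-b)⁻¹ ^ #s * ∏ j ∈ s, (v j * b - 1) := by
    simp only [eval_nodal, hnode, prod_mul_distrib, prod_const]
  have hfb : f.eval b⁻¹ = (-b)⁻¹ ^ #t * ∏ l ∈ t, (b - c l) := by
    simp only [hf_eval, mul_comm b⁻¹, hcoef, prod_mul_distrib, prod_const]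
  have hterm : ∀ j ∈ s, nodalWeight s v j * (b⁻¹ - v j)⁻¹ * f.eval (v j) =
      -b * ((v j * b - 1)⁻¹ * (nodalWeight s v j * ∏ l ∈ t, (v j * c l - 1))) := by
    intro j _
    rw [hnode, hf_eval, mul_inv, inv_inv]
    ring
  rw [sum_congr rfl hterm, ← mul_sum, hnodal, hfb, hst, pow_succ, mul_assoc, mul_assoc] at key
  rw [eq_inv_mul_iff_mul_eq₀ hD, mul_left_cancel₀ (pow_ne_zero _ (inv_ne_zero hb')) key,
    mul_left_comm _ (-b), ← mul_assoc, inv_mul_cancel₀ hb', one_mul]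

theorem srj_sum_identity_general (P : ℕ) (ω κ : Fin P → ℝ)
    (hω0 : ∀ i, ω i ≠ 0)
    (hκ : Function.Injective κ)
    (h1 : ∀ i j, κ j * ω i ≠ 1) :
    ∀ i m : Fin P,
      (∑ j, (1 / (-1 + κ j * ω m)) *
          ((∏ k ∈ univ.erase j, (κ j - κ k)⁻¹) *
            ∏ l ∈ univ.erase i, (-1 + κ j * ω l))) =
        (if i = m then (1 : ℝ) else 0) *
          ((∏ k, (-1 + κ k * ω i)⁻¹) * ∏ l ∈ univ.erase i, (ω i - ω l)) := by
  intro i m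
  have hcard : #(univ : Finset (Fin P)) = #(univ.erase i) + 1 :=
    (card_erase_add_one (mem_univ i)).symm
  have key := sum_inv_mul_nodalWeight_mul_prod hκ.injOn (univ.erase i) ω hcard (hω0 m)
    fun j _ => h1 m j
  simp only [neg_add_eq_sub, one_div]
  refine key.trans ?_
  by_cases him : i = m
  · subst him
    simp [prod_inv_distrib]
  · rw [prod_eq_zero (mem_erase.mpr ⟨Ne.symm him, mem_univ m⟩) (sub_self _), if_neg him]
    simp

/-- Key summation identity from Lemma 1 of the paper. -/
theorem srj_sum_identity (P : ℕ) (hP : 2 ≤ P) (ω κ : Fin P → ℝ)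
    (hω : Function.Injective ω) (hω0 : ∀ i, ω i ≠ 0)
    (hκ : Function.Injective κ)
    (h1 : ∀ i j, κ j * ω i ≠ 1) :
    ∀ i m : Fin P,
      (∑ j, (1 / (-1 + κ j * ω m)) *
          ((∏ k ∈ univ.erase j, (κ j - κ k)⁻¹) *
            ∏ l ∈ univ.erase i, (-1 + κ j * ω l))) =
        (if i = m then (1 : ℝ) else 0) *
          ((∏ k, (-1 + κ k * ω i)⁻¹) * ∏ l ∈ univ.erase i, (ω i - ω l)) :=
  srj_sum_identity_general P ω κ hω0 hκ h1
end

section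
/- Let P ≥ 2, let ω₁,…,ω_P be pairwise distinct nonzero reals, β₁,…,β_P nonzero reals, and κ₁,…,κ_P pairwise distinct nonzero reals with κ_i ω_j ≠ 1 for all i,j. Define the P×P matrix A by a_{ij} = κ_i β_j/(1-κ_i ω_j) and define Ã by ã_{ij} = ∏_{k≠j} ∏_{l≠i} (1-κ_j ω_i)(1-κ_k ω_i)(1-κ_j ω_l) / [β_i κ_j (κ_k-κ_j)(ω_l-ω_i)]. Then à · A = I, i.e. à is the inverse of A. -/
/-!
Entry `(i, j)` of `Ã A` is a constant times
`∑ m, p (κ m) / ((1 - κ m * ω j) * ∏_{k ≠ m} (κ k - κ m))`, where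
`p x = ∏_{l ≠ i} (1 - x * ω l)` has degree `P - 1` and so coincides with its Lagrange
interpolant at the nodes `κ`. Since `1 - κ m * ω j = ω j * ((ω j)⁻¹ - κ m)`, this sum is the
barycentric form of that interpolant at the point `(ω j)⁻¹`, which evaluates to
`∏_{l ≠ i} (ω l - ω j) / ∏_k (1 - κ k * ω j)`. For `i ≠ j` the factor `l = j` vanishes; for
`i = j` it cancels the constant.
-/

open Finset Polynomial

namespace Lagrange

variable {F ι : Type*} [Field F] [DecidableEq ι] {s : Finset ι} {v : ι → F} {x : F}

theorem sum_nodalWeight_mul_inv_sub_mul_eval (hvs : Set.InjOn v s) {p : F[X]}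
    (hp : p.degree < #s) (hx : ∀ i ∈ s, x ≠ v i) :
    ∑ i ∈ s, nodalWeight s v i * (x - v i)⁻¹ * p.eval (v i) = p.eval x / (nodal s v).eval x := by
  rw [eq_div_iff (eval_nodal_not_at_node hx), mul_comm, ← eval_interpolate_not_at_node _ hx,
    ← eq_interpolate hvs hp]

end Lagrange

theorem Polynomial.natDegree_prod_one_sub_C_mul_X_le {R ι : Type*} [CommRing R]
    (t : Finset ι) (ω : ι → R) : (∏ l ∈ t, (1 - C (ω l) * X)).natDegree ≤ #t :=
  (natDegree_prod_le _ _).trans <|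
    (sum_le_card_nsmul _ _ 1 fun _ _ => by compute_degree).trans (by simp)

theorem Finset.prod_sub_eq_neg_one_pow_mul_prod_sub {R ι : Type*} [CommRing R] (s : Finset ι)
    (a b : ι → R) : ∏ k ∈ s, (a k - b k) = (-1) ^ #s * ∏ k ∈ s, (b k - a k) := by
  rw [← prod_neg]
  simp

theorem sum_prod_one_sub_div_eq_prod_sub_div_prod_one_sub {F ι κ : Type*} [Field F]
    [DecidableEq ι] {s : Finset ι} {t : Finset κ} {x : ι → F} {ω : κ → F} {c : F}
    (hx : Set.InjOn x s) (hst : #s = #t + 1) (hc : c ≠ 0) (hxc : ∀ k ∈ s, x k * c ≠ 1) :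
    ∑ m ∈ s, (∏ l ∈ t, (1 - x m * ω l)) / ((1 - x m * c) * ∏ k ∈ s.erase m, (x k - x m)) =
      (∏ l ∈ t, (ω l - c)) / ∏ k ∈ s, (1 - x k * c) := by
  set p : F[X] := ∏ l ∈ t, (1 - C (ω l) * X)
  have hp : ∀ z, p.eval z = ∏ l ∈ t, (1 - z * ω l) := by
    intro z
    simp only [p, eval_prod, eval_sub, eval_one, eval_mul, eval_C, eval_X, mul_comm]
  have hpdeg : p.degree < #s :=
    (degree_le_of_natDegree_le (natDegree_prod_one_sub_C_mul_X_le t ω)).trans_lt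
      (by rw [hst]; exact_mod_cast Nat.lt_succ_self _)
  have hcx : ∀ k ∈ s, c⁻¹ ≠ x k := fun k hk h => hxc k hk (by rw [← h, inv_mul_cancel₀ hc])
  have hsummand : ∀ m ∈ s,
      (∏ l ∈ t, (1 - x m * ω l)) / ((1 - x m * c) * ∏ k ∈ s.erase m, (x k - x m)) =
        ((-1) ^ #t * c)⁻¹ * (Lagrange.nodalWeight s x m * (c⁻¹ - x m)⁻¹ * p.eval (x m)) := by
    intro m hm
    rw [prod_sub_eq_neg_one_pow_mul_prod_sub (s.erase m) x fun _ => x m, card_erase_of_mem hm,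
      hst, Nat.add_sub_cancel, Lagrange.nodalWeight, prod_inv_distrib, hp]
    field_simp
  have hpc : ∏ l ∈ t, (1 - c⁻¹ * ω l) = (-1) ^ #t * c⁻¹ ^ #t * ∏ l ∈ t, (ω l - c) := by
    rw [← mul_pow, ← prod_const, ← prod_mul_distrib]
    refine prod_congr rfl fun l _ => ?_
    field_simp
    ring
  have hnodal : ∏ k ∈ s, (c⁻¹ - x k) = c⁻¹ ^ #s * ∏ k ∈ s, (1 - x k * c) := by
    rw [← prod_const, ← prod_mul_distrib]
    refine prod_congr rfl fun k _ => ?_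
    field_simp
  have hne : ∏ k ∈ s, (1 - x k * c) ≠ 0 :=
    prod_ne_zero_iff.2 fun k hk => sub_ne_zero_of_ne (hxc k hk).symm
  rw [sum_congr rfl hsummand, ← mul_sum,
    Lagrange.sum_nodalWeight_mul_inv_sub_mul_eval hx hpdeg hcx, hp, Lagrange.eval_nodal, hpc,
    hnodal, hst, pow_succ]
  field_simp

section CauchyLike

variable {F ι : Type*} [Field F] [Fintype ι] [DecidableEq ι] (ω β κ : ι → F)

def cauchyLikeMatrix : Matrix ι ι F :=
  Matrix.of fun i j => κ i * β j / (1 - κ i * ω j)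

def cauchyLikeMatrixInv : Matrix ι ι F :=
  Matrix.of fun i j =>
    (1 - κ j * ω i) / (β i * κ j) *
      (∏ k ∈ univ.erase j, (1 - κ k * ω i) / (κ k - κ j)) *
      ∏ l ∈ univ.erase i, (1 - κ j * ω l) / (ω l - ω i)

variable {ω β κ}

theorem cauchyLikeMatrixInv_mul_cauchyLikeMatrix_apply (hκ : Function.Injective κ)
    (hκ0 : ∀ i, κ i ≠ 0) (h1 : ∀ i j, κ i * ω j ≠ 1) (i : ι) {j : ι} (hωj : ω j ≠ 0) :
    (cauchyLikeMatrixInv ω β κ * cauchyLikeMatrix ω β κ) i j =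
      β j * (∏ k, (1 - κ k * ω i)) / (β i * ∏ l ∈ univ.erase i, (ω l - ω i)) *
        ((∏ l ∈ univ.erase i, (ω l - ω j)) / ∏ k, (1 - κ k * ω j)) := by
  have hsummand : ∀ m, cauchyLikeMatrixInv ω β κ i m * cauchyLikeMatrix ω β κ m j =
      β j * (∏ k, (1 - κ k * ω i)) / (β i * ∏ l ∈ univ.erase i, (ω l - ω i)) *
        ((∏ l ∈ univ.erase i, (1 - κ m * ω l)) /
          ((1 - κ m * ω j) * ∏ k ∈ univ.erase m, (κ k - κ m))) := by
    intro m
    rw [← mul_prod_erase univ (fun k => 1 - κ k * ω i) (mem_univ m)]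
    simp only [cauchyLikeMatrixInv, cauchyLikeMatrix, Matrix.of_apply, prod_div_distrib]
    simp only [div_eq_mul_inv, mul_inv]
    field_simp [hκ0 m]
  rw [Matrix.mul_apply, sum_congr rfl fun m _ => hsummand m, ← mul_sum,
    sum_prod_one_sub_div_eq_prod_sub_div_prod_one_sub hκ.injOn
      (card_erase_add_one (mem_univ i)).symm hωj fun k _ => h1 k j]

theorem cauchyLikeMatrixInv_mul_cauchyLikeMatrix (hω : Function.Injective ω)
    (hω0 : ∀ i, ω i ≠ 0) (hβ : ∀ i, β i ≠ 0) (hκ : Function.Injective κ) (hκ0 : ∀ i, κ i ≠ 0)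
    (h1 : ∀ i j, κ i * ω j ≠ 1) :
    cauchyLikeMatrixInv ω β κ * cauchyLikeMatrix ω β κ = 1 := by
  ext i j
  rw [Matrix.one_apply, cauchyLikeMatrixInv_mul_cauchyLikeMatrix_apply hκ hκ0 h1 i (hω0 j)]
  split_ifs with hij
  · subst hij
    have hω : ∏ l ∈ univ.erase i, (ω l - ω i) ≠ 0 :=
      prod_ne_zero_iff.2 fun l hl => sub_ne_zero_of_ne fun h => (mem_erase.1 hl).1 (hω h)
    have hκω : ∏ k, (1 - κ k * ω i) ≠ 0 :=
      prod_ne_zero_iff.2 fun k _ => sub_ne_zero_of_ne (h1 k i).symm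
    rw [div_mul_div_comm, div_eq_one_iff_eq (by simp [hβ i, hω, hκω])]
    ring
  · rw [prod_eq_zero (f := fun l => ω l - ω j) (mem_erase.2 ⟨Ne.symm hij, mem_univ j⟩)
      (sub_self _), zero_div, mul_zero]

end CauchyLike

theorem srj_matrix_A_inverse_general (P : ℕ) (ω β κ : Fin P → ℝ)
    (hω : Function.Injective ω) (hω0 : ∀ i, ω i ≠ 0)
    (hβ : ∀ i, β i ≠ 0)
    (hκ : Function.Injective κ) (hκ0 : ∀ i, κ i ≠ 0)
    (h1 : ∀ i j, κ i * ω j ≠ 1)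
    (A At : Matrix (Fin P) (Fin P) ℝ)
    (hA : A = fun i j => κ i * β j / (1 - κ i * ω j))
    (hAt : At = fun i j =>
      (1 - κ j * ω i) / (β i * κ j) *
        (∏ k ∈ univ.erase j, (1 - κ k * ω i) / (κ k - κ j)) *
        ∏ l ∈ univ.erase i, (1 - κ j * ω l) / (ω l - ω i)) :
    At * A = 1 := by
  subst hA hAt
  exact cauchyLikeMatrixInv_mul_cauchyLikeMatrix hω hω0 hβ hκ hκ0 h1

/-- Lemma 1 (first part): explicit inverse of the Cauchy-like matrix
`A i j = κ i * β j / (1 - κ i * ω j)`. -/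
theorem srj_matrix_A_inverse (P : ℕ) (hP : 2 ≤ P) (ω β κ : Fin P → ℝ)
    (hω : Function.Injective ω) (hω0 : ∀ i, ω i ≠ 0)
    (hβ : ∀ i, β i ≠ 0)
    (hκ : Function.Injective κ) (hκ0 : ∀ i, κ i ≠ 0)
    (h1 : ∀ i j, κ i * ω j ≠ 1)
    (A At : Matrix (Fin P) (Fin P) ℝ)
    (hA : A = fun i j => κ i * β j / (1 - κ i * ω j))
    (hAt : At = fun i j =>
      (1 - κ j * ω i) / (β i * κ j) *
        (∏ k ∈ univ.erase j, (1 - κ k * ω i) / (κ k - κ j)) *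
        ∏ l ∈ univ.erase i, (1 - κ j * ω l) / (ω l - ω i)) :
    At * A = 1 :=
  srj_matrix_A_inverse_general P ω β κ hω hω0 hβ hκ hκ0 h1 A At hA hAt
end

section
/- Let P ≥ 2, let ω₁,…,ω_P be pairwise distinct nonzero reals, and κ₁,…,κ_{P-1} pairwise distinct reals with κ_i ω_j ≠ 1 for all relevant i,j. Define the (P-1)×(P-1) matrix B by b_{ij} = (1-ω_j/ω_P)/(1-κ_i ω_j) for i,j = 1,…,P-1, and define B̃ by b̃_{ij} = [ω_P(1-κ_j ω_i)/(1-κ_j ω_P)] · ∏_{k≠j, k≤P-1} ∏_{l≠i, l≤P} (1-κ_k ω_i)(1-κ_j ω_l)/[(κ_k-κ_j)(ω_l-ω_i)]. Then B̃ · B = I. -/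
/-!
Put `x = -1/ω_m`. Then `1/(1 - κ_j ω_m) = x/(x + κ_j)` and `1 + ω_l x = x (ω_l - ω_m)`. Once the
factor `1 - κ_j ω_P` cancels, `∑_j B̃_ij B_jm` is therefore a multiple of the barycentric Lagrange sum
of `g(y) = ∏_{l ≠ i, l < P} (1 + ω_l y)`, of degree `< P - 1`, over the `P - 1` nodes `-κ_j`,
evaluated at `x`. That sum is `g(x) / ∏_j (x + κ_j)`, a multiple of `∏_{l ≠ i} (ω_l - ω_m)`: it
vanishes for `m ≠ i`, and for `m = i` the remaining factors cancel to `1`.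
-/

open Finset Polynomial Lagrange

theorem Fin.prod_univ_erase_castSucc {M : Type*} [CommMonoid M] {n : ℕ}
    (f : Fin (n + 1) → M) (i : Fin n) :
    ∏ l ∈ univ.erase i.castSucc, f l = (∏ l ∈ univ.erase i, f l.castSucc) * f (Fin.last n) := by
  have h (m : ℕ) (g : Fin m → M) (a : Fin m) :
      ∏ l ∈ univ.erase a, g l = ∏ l, Function.update g a 1 l := by
    rw [prod_update_of_mem (mem_univ a), one_mul, sdiff_singleton_eq_erase]
  rw [h, h, Fin.prod_univ_castSucc, Function.update_of_ne (Fin.castSucc_lt_last i).ne']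
  simp only [Function.update_apply, Fin.castSucc_inj]

theorem Polynomial.degree_prod_C_mul_X_add_one_le {R ι : Type*} [CommSemiring R]
    (s : Finset ι) (a : ι → R) :
    (∏ l ∈ s, (C (a l) * X + 1)).degree ≤ (#s : WithBot ℕ) := by
  refine degree_le_of_natDegree_le ((natDegree_prod_le _ _).trans ?_)
  calc _ ≤ #s • 1 := sum_le_card_nsmul _ _ 1 fun l _ => by compute_degree
    _ = #s := by rw [smul_eq_mul, mul_one]

theorem Lagrange.sum_nodalWeight_mul_eval_div_sub {F ι : Type*} [Field F] [DecidableEq ι]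
    {s : Finset ι} {v : ι → F} {f : F[X]} {x : F} (hvs : Set.InjOn v s)
    (hf : f.degree < #s) (hx : ∀ i ∈ s, x ≠ v i) :
    ∑ i ∈ s, nodalWeight s v i * f.eval (v i) / (x - v i) = f.eval x / (nodal s v).eval x := by
  have h := eval_interpolate_not_at_node (fun i => f.eval (v i)) hx
  rw [← eq_interpolate hvs hf] at h
  rw [eq_div_iff (eval_nodal_not_at_node hx), h, mul_comm]
  exact congrArg _ (sum_congr rfl fun i _ => by ring)

theorem sum_prod_one_sub_mul_div_one_sub_mul {K ι ι' : Type*} [Field K] [Fintype ι]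
    [DecidableEq ι] {κ : ι → K} (hκ : Function.Injective κ) {s : Finset ι'}
    (hs : #s + 1 = Fintype.card ι) (a : ι' → K) {b : K} (hb : b ≠ 0)
    (hκb : ∀ j, κ j * b ≠ 1) :
    ∑ j, (∏ l ∈ s, (1 - κ j * a l)) / (∏ k ∈ univ.erase j, (κ k - κ j)) / (1 - κ j * b) =
      (∏ l ∈ s, (a l - b)) / ∏ k, (1 - κ k * b) := by
  set x := -b⁻¹ with hx
  set g : K[X] := ∏ l ∈ s, (C (a l) * X + 1)
  have hx0 : x ≠ 0 := neg_ne_zero.mpr (inv_ne_zero hb)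
  have hsub (k : ι) : x - (-κ) k = (1 - κ k * b) * x := by
    rw [hx, Pi.neg_apply]; field_simp; ring
  have hlin (l : ι') : a l * x + 1 = (a l - b) * x := by
    rw [hx]; field_simp; ring
  have hnode (j : ι) (_ : j ∈ univ) : x ≠ (-κ) j :=
    sub_ne_zero.mp (hsub j ▸ mul_ne_zero (sub_ne_zero.mpr (hκb j).symm) hx0)
  have hdeg : g.degree < #(univ : Finset ι) := by
    refine (degree_prod_C_mul_X_add_one_le s a).trans_lt (WithBot.coe_lt_coe.mpr ?_)
    rw [card_univ, ← hs]; exact Nat.lt_succ_self _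
  have heval (y : K) : g.eval y = ∏ l ∈ s, (a l * y + 1) := by
    simp only [g, eval_prod, eval_add, eval_mul, eval_C, eval_X, eval_one]
  have hterm (j : ι) :
      (∏ l ∈ s, (1 - κ j * a l)) / (∏ k ∈ univ.erase j, (κ k - κ j)) / (1 - κ j * b) =
        x * (nodalWeight univ (-κ) j * g.eval ((-κ) j) / (x - (-κ) j)) := by
    have hw : nodalWeight univ (-κ) j = (∏ k ∈ univ.erase j, (κ k - κ j))⁻¹ := by
      rw [nodalWeight, ← prod_inv_distrib]
      exact prod_congr rfl fun k _ => by rw [Pi.neg_apply, Pi.neg_apply, neg_sub_neg]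
    have hgj : g.eval ((-κ) j) = ∏ l ∈ s, (1 - κ j * a l) :=
      (heval _).trans (prod_congr rfl fun l _ => by rw [Pi.neg_apply]; ring)
    rw [hw, hgj, hsub]
    field_simp
  rw [sum_congr rfl fun j _ => hterm j, ← mul_sum,
    sum_nodalWeight_mul_eval_div_sub (v := -κ) (neg_injective.comp hκ).injOn hdeg hnode,
    heval, prod_congr rfl fun l _ => hlin l,
    ← prod_mul_pow_card, eval_nodal, prod_congr rfl fun k _ => hsub k, ← prod_mul_pow_card,
    card_univ, ← hs, pow_succ]
  field_simp

section

variable {K : Type*} [Field K] {n : ℕ} (ω : Fin (n + 1) → K) (κ : Fin n → K)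

def srjB : Matrix (Fin n) (Fin n) K :=
  Matrix.of fun i j => (1 - ω j.castSucc / ω (Fin.last n)) / (1 - κ i * ω j.castSucc)

def srjBTilde : Matrix (Fin n) (Fin n) K :=
  Matrix.of fun i j =>
    ω (Fin.last n) * (1 - κ j * ω i.castSucc) / (1 - κ j * ω (Fin.last n)) *
      (∏ k ∈ univ.erase j, (1 - κ k * ω i.castSucc) / (κ k - κ j)) *
      ∏ l ∈ univ.erase i.castSucc, (1 - κ j * ω l) / (ω l - ω i.castSucc)

variable {ω κ}

theorem srjBTilde_apply {i j : Fin n} (hj : κ j * ω (Fin.last n) ≠ 1) :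
    srjBTilde ω κ i j =
      ω (Fin.last n) * (∏ k, (1 - κ k * ω i.castSucc)) /
          (∏ l ∈ univ.erase i.castSucc, (ω l - ω i.castSucc)) *
        ((∏ l ∈ univ.erase i, (1 - κ j * ω l.castSucc)) / ∏ k ∈ univ.erase j, (κ k - κ j)) := by
  have hj' : 1 - κ j * ω (Fin.last n) ≠ 0 := sub_ne_zero.mpr hj.symm
  rw [srjBTilde, Matrix.of_apply, prod_div_distrib, prod_div_distrib,
    Fin.prod_univ_erase_castSucc (fun l => 1 - κ j * ω l),
    ← mul_prod_erase univ (fun k => 1 - κ k * ω i.castSucc) (mem_univ j)]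
  generalize 1 - κ j * ω (Fin.last n) = c at hj' ⊢
  field_simp

theorem srjBTilde_mul_srjB_apply (hω0 : ∀ i, ω i ≠ 0) (hκ : Function.Injective κ)
    (h1 : ∀ i j, κ i * ω j ≠ 1) (i m : Fin n) :
    (srjBTilde ω κ * srjB ω κ) i m =
      (∏ k, (1 - κ k * ω i.castSucc)) * (∏ l ∈ univ.erase i.castSucc, (ω l - ω m.castSucc)) /
        ((∏ l ∈ univ.erase i.castSucc, (ω l - ω i.castSucc)) * ∏ k, (1 - κ k * ω m.castSucc)) := by
  have hWm : ω (Fin.last n) * (1 - ω m.castSucc / ω (Fin.last n)) =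
      ω (Fin.last n) - ω m.castSucc := by
    field_simp [hω0 (Fin.last n)]
  have hterm (j : Fin n) : srjBTilde ω κ i j * srjB ω κ j m =
      ω (Fin.last n) * (1 - ω m.castSucc / ω (Fin.last n)) *
        ((∏ k, (1 - κ k * ω i.castSucc)) / ∏ l ∈ univ.erase i.castSucc, (ω l - ω i.castSucc)) *
        ((∏ l ∈ univ.erase i, (1 - κ j * ω l.castSucc)) /
          (∏ k ∈ univ.erase j, (κ k - κ j)) / (1 - κ j * ω m.castSucc)) := by
    rw [srjBTilde_apply (h1 j _), srjB, Matrix.of_apply]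
    ring
  rw [Matrix.mul_apply, sum_congr rfl fun j _ => hterm j, ← mul_sum,
    sum_prod_one_sub_mul_div_one_sub_mul hκ ((card_erase_add_one (mem_univ i)).trans card_univ)
      _ (hω0 _) fun j => h1 j _,
    hWm, Fin.prod_univ_erase_castSucc (fun l => ω l - ω m.castSucc)]
  ring

end

theorem srj_matrix_B_inverse_general (n : ℕ)
    (ω : Fin (n + 1) → ℝ) (κ : Fin n → ℝ)
    (hω : Function.Injective ω) (hω0 : ∀ i, ω i ≠ 0)
    (hκ : Function.Injective κ)
    (h1 : ∀ (i : Fin n) (j : Fin (n + 1)), κ i * ω j ≠ 1)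
    (B Bt : Matrix (Fin n) (Fin n) ℝ)
    (hB : B = fun i j =>
      (1 - ω j.castSucc / ω (Fin.last n)) / (1 - κ i * ω j.castSucc))
    (hBt : Bt = fun i j =>
      ω (Fin.last n) * (1 - κ j * ω i.castSucc) / (1 - κ j * ω (Fin.last n)) *
        (∏ k ∈ univ.erase j, (1 - κ k * ω i.castSucc) / (κ k - κ j)) *
        ∏ l ∈ univ.erase i.castSucc, (1 - κ j * ω l) / (ω l - ω i.castSucc)) :
    Bt * B = 1 := by
  subst hB hBt
  ext i m
  change (srjBTilde ω κ * srjB ω κ) i m = _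
  rw [srjBTilde_mul_srjB_apply hω0 hκ h1, Matrix.one_apply]
  have hA : ∏ k, (1 - κ k * ω i.castSucc) ≠ 0 :=
    prod_ne_zero_iff.mpr fun k _ => sub_ne_zero.mpr (h1 k _).symm
  have hE : ∏ l ∈ univ.erase i.castSucc, (ω l - ω i.castSucc) ≠ 0 :=
    prod_ne_zero_iff.mpr fun l hl => sub_ne_zero.mpr (hω.ne (ne_of_mem_erase hl))
  split_ifs with him
  · subst him
    rw [mul_comm, div_self (mul_ne_zero hE hA)]
  · have hmi : m.castSucc ∈ univ.erase i.castSucc :=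
      mem_erase.mpr ⟨(Fin.castSucc_injective n).ne (Ne.symm him), mem_univ _⟩
    rw [prod_eq_zero hmi (sub_self _), mul_zero, zero_div]

/-- Lemma 1 (second part): explicit inverse of the matrix
`B i j = (1 - ω j / ω P) / (1 - κ i * ω j)`, with `P = n + 1` levels. -/
theorem srj_matrix_B_inverse (n : ℕ) (hn : 1 ≤ n)
    (ω : Fin (n + 1) → ℝ) (κ : Fin n → ℝ)
    (hω : Function.Injective ω) (hω0 : ∀ i, ω i ≠ 0)
    (hκ : Function.Injective κ)
    (h1 : ∀ (i : Fin n) (j : Fin (n + 1)), κ i * ω j ≠ 1)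
    (B Bt : Matrix (Fin n) (Fin n) ℝ)
    (hB : B = fun i j =>
      (1 - ω j.castSucc / ω (Fin.last n)) / (1 - κ i * ω j.castSucc))
    (hBt : Bt = fun i j =>
      ω (Fin.last n) * (1 - κ j * ω i.castSucc) / (1 - κ j * ω (Fin.last n)) *
        (∏ k ∈ univ.erase j, (1 - κ k * ω i.castSucc) / (κ k - κ j)) *
        ∏ l ∈ univ.erase i.castSucc, (1 - κ j * ω l) / (ω l - ω i.castSucc)) :
    Bt * B = 1 :=
  srj_matrix_B_inverse_general n ω κ hω hω0 hκ h1 B Bt hB hBt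
end

section
/- With the same setup, the effective matrix is also weakly diagonally dominant by columns: for every column j (j = 2,…,N), |Â_{jj}| ≥ Σ_{i≠j} |Â_{ij}|. -/
open Finset

/-- The effective coefficient matrix of the 1D finite-difference discretization of
the spherical Poisson equation, with indices `i, j = 2, …, N` (here represented by
`Fin (N-1)`, index `i : Fin (N-1)` corresponding to the grid index `i.1 + 2`). -/
noncomputable def Ahat (N : ℕ) : Matrix (Fin (N - 1)) (Fin (N - 1)) ℝ :=
  fun i j =>
    let Δr : ℝ := 1 / N
    let r : ℕ → ℝ := fun m => ((m : ℝ) - 1 / 2) * Δr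
    let ii := i.1 + 2
    let jj := j.1 + 2
    if i.1 = 0 then
      if jj = 2 then -(r 2 + 2 * Δr) * r 2 / Δr ^ 2
      else if jj = 3 then (r 2 + 2 * Δr) * r 2 / Δr ^ 2
      else 0
    else
      if jj + 1 = ii then (r ii - 2 * Δr) * r ii / Δr ^ 2
      else if jj = ii then -2 * r ii ^ 2 / Δr ^ 2
      else if jj = ii + 1 then (r ii + 2 * Δr) * r ii / Δr ^ 2
      else 0

/-!
In column `j` the only nonzero off-diagonal entries are the super-diagonal entry of row `j - 1`
(if `j ≥ 1`) and the sub-diagonal entry of row `j + 1`. Once the factor `Δr⁻²` cancels, both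
equal `(j + 1/2)(j + 5/2)` (for `j = 1` the modified first row gives the same value), while the
diagonal entry has modulus `2 (j + 3/2)² ≥ 2 (j + 1/2)(j + 5/2)`, or `21/4 ≥ 5/2` when `j = 0`.
-/

lemma card_filter_adjacent_le_two {n : ℕ} (j : Fin n) :
    #{i : Fin n | i.1 + 1 = j.1 ∨ i.1 = j.1 + 1} ≤ 2 := by
  calc #{i : Fin n | i.1 + 1 = j.1 ∨ i.1 = j.1 + 1}
      ≤ #({j.1 - 1, j.1 + 1} : Finset ℕ) := by
        refine card_le_card_of_injOn Fin.val (fun i hi => ?_) Fin.val_injective.injOn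
        simp only [coe_filter, Set.mem_ofPred_eq, mem_univ, true_and] at hi
        simp only [coe_insert, coe_singleton, Set.mem_insert_iff, Set.mem_singleton_iff]
        omega
    _ ≤ 2 := card_le_two

section

variable {N : ℕ}

lemma Ahat_apply_of_val_eq_succ {i j : Fin (N - 1)} (h : i.1 = j.1 + 1) :
    Ahat N i j = ((j.1 : ℝ) + 1 / 2) * ((j.1 : ℝ) + 5 / 2) := by
  have hN : (N : ℝ) ≠ 0 := Nat.cast_ne_zero.mpr (by have := j.2; omega)
  simp only [Ahat]
  rw [if_neg (by omega), if_pos (by omega), h]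
  push_cast
  field_simp
  ring

lemma Ahat_apply_of_succ_eq_val {i j : Fin (N - 1)} (h : i.1 + 1 = j.1) :
    Ahat N i j = ((j.1 : ℝ) + 1 / 2) * ((j.1 : ℝ) + 5 / 2) := by
  have hN : (N : ℝ) ≠ 0 := Nat.cast_ne_zero.mpr (by have := j.2; omega)
  simp only [Ahat, ← h]
  split_ifs with h0 <;> first | omega | (try rw [h0]); push_cast; field_simp; ring

lemma Ahat_apply_eq_zero {i j : Fin (N - 1)} (hij : i ≠ j)
    (h : ¬(i.1 + 1 = j.1 ∨ i.1 = j.1 + 1)) : Ahat N i j = 0 := by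
  have hval : i.1 ≠ j.1 := Fin.val_ne_of_ne hij
  simp only [Ahat]
  split_ifs <;> first | rfl | omega

lemma abs_Ahat_apply_of_ne {i j : Fin (N - 1)} (hij : i ≠ j) :
    |Ahat N i j| = if i.1 + 1 = j.1 ∨ i.1 = j.1 + 1
      then ((j.1 : ℝ) + 1 / 2) * ((j.1 : ℝ) + 5 / 2) else 0 := by
  split_ifs with h
  · rcases h with h | h
    · rw [Ahat_apply_of_succ_eq_val h, abs_of_nonneg (by positivity)]
    · rw [Ahat_apply_of_val_eq_succ h, abs_of_nonneg (by positivity)]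
  · rw [Ahat_apply_eq_zero hij h, abs_zero]

lemma Ahat_apply_self (j : Fin (N - 1)) :
    Ahat N j j = if j.1 = 0 then -(21 / 4 : ℝ) else -2 * ((j.1 : ℝ) + 3 / 2) ^ 2 := by
  have hN : (N : ℝ) ≠ 0 := Nat.cast_ne_zero.mpr (by have := j.2; omega)
  simp only [Ahat]
  split_ifs <;> first | omega | (push_cast; field_simp; ring)

lemma two_mul_le_abs_Ahat_apply_self (j : Fin (N - 1)) :
    2 * (((j.1 : ℝ) + 1 / 2) * ((j.1 : ℝ) + 5 / 2)) ≤ |Ahat N j j| := by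
  rw [Ahat_apply_self]
  split_ifs with h0
  · rw [h0]
    norm_num
  · rw [abs_of_nonpos (by nlinarith)]
    nlinarith

end

theorem Ahat_column_diagonally_dominant_general (N : ℕ) :
    ∀ j : Fin (N - 1), ∑ i ∈ univ.erase j, |Ahat N i j| ≤ |Ahat N j j| := by
  intro j
  set c : ℝ := ((j.1 : ℝ) + 1 / 2) * ((j.1 : ℝ) + 5 / 2)
  calc ∑ i ∈ univ.erase j, |Ahat N i j|
      = ∑ i ∈ univ.erase j, if i.1 + 1 = j.1 ∨ i.1 = j.1 + 1 then c else 0 :=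
        sum_congr rfl fun i hi => abs_Ahat_apply_of_ne (ne_of_mem_erase hi)
    _ ≤ ∑ i : Fin (N - 1), if i.1 + 1 = j.1 ∨ i.1 = j.1 + 1 then c else 0 :=
        sum_le_sum_of_subset_of_nonneg (erase_subset j univ) fun i _ _ => by positivity
    _ = #{i : Fin (N - 1) | i.1 + 1 = j.1 ∨ i.1 = j.1 + 1} * c := by
        rw [← sum_filter, sum_const, nsmul_eq_mul]
    _ ≤ 2 * c := by
        gcongr
        exact_mod_cast card_filter_adjacent_le_two j
    _ ≤ |Ahat N j j| := two_mul_le_abs_Ahat_apply_self j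

/-- The effective matrix `Â` is weakly diagonally dominant by columns. -/
theorem Ahat_column_diagonally_dominant (N : ℕ) (hN : 3 ≤ N) :
    ∀ j : Fin (N - 1), ∑ i ∈ univ.erase j, |Ahat N i j| ≤ |Ahat N j j| :=
  Ahat_column_diagonally_dominant_general N
end
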